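/- arXiv:1911.01957 — 10 statements merged into one kernel-verified Lean document; each statement's English description precedes it below -/
import Mathlib

section
/- Let F be a field of characteristic zero and L a finite-dimensional Lie algebra over F. If L has only finitely many Lie ideals, then the lattice of Lie ideals of L is distributive; that is, for all Lie ideals I, J, K of L one has I ⊓ (J ⊔ K) = (I ⊓ J) ⊔ (I ⊓ K). -/
section ModularM3

variable {α : Type*} [Lattice α] [IsModularLattice α]

/-- Key modular-lattice computation: the meet of two "median-style" elements. -/
private lemma m3_inf_aux (a b c : α) :
    (a ⊔ b ⊓ c) ⊓ (b ⊔ a ⊓ c) = a ⊓ b ⊔ b ⊓ c ⊔ a ⊓ c := by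
  have h1 : (a ⊓ c ⊔ b) ⊓ (a ⊔ b ⊓ c) = a ⊓ c ⊔ b ⊓ (a ⊔ b ⊓ c) :=
    sup_inf_assoc_of_le b (inf_le_left.trans le_sup_left)
  have h2 : (b ⊓ c ⊔ a) ⊓ b = b ⊓ c ⊔ a ⊓ b :=
    sup_inf_assoc_of_le a inf_le_left
  calc (a ⊔ b ⊓ c) ⊓ (b ⊔ a ⊓ c)
      = (a ⊓ c ⊔ b) ⊓ (a ⊔ b ⊓ c) := by rw [sup_comm b (a ⊓ c), inf_comm]
    _ = a ⊓ c ⊔ b ⊓ (a ⊔ b ⊓ c) := h1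
    _ = a ⊓ c ⊔ (b ⊓ c ⊔ a) ⊓ b := by rw [inf_comm b (a ⊔ b ⊓ c), sup_comm a (b ⊓ c)]
    _ = a ⊓ c ⊔ (b ⊓ c ⊔ a ⊓ b) := by rw [h2]
    _ = a ⊓ b ⊔ b ⊓ c ⊔ a ⊓ c := by
        rw [sup_comm (a ⊓ c) (b ⊓ c ⊔ a ⊓ b), sup_comm (b ⊓ c) (a ⊓ b)]

/-- Dual computation: the join of two "median-style" elements. -/
private lemma m3_sup_aux (a b c : α) :
    a ⊓ (b ⊔ c) ⊔ b ⊓ (a ⊔ c) = (a ⊔ b) ⊓ (b ⊔ c) ⊓ (a ⊔ c) := by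
  have h1 : a ⊓ (b ⊔ c) ⊔ b ⊓ (a ⊔ c) = (a ⊓ (b ⊔ c) ⊔ b) ⊓ (a ⊔ c) :=
    (sup_inf_assoc_of_le b (inf_le_left.trans le_sup_left)).symm
  have h2 : (b ⊔ a) ⊓ (b ⊔ c) = b ⊔ a ⊓ (b ⊔ c) :=
    sup_inf_assoc_of_le a le_sup_left
  calc a ⊓ (b ⊔ c) ⊔ b ⊓ (a ⊔ c)
      = (a ⊓ (b ⊔ c) ⊔ b) ⊓ (a ⊔ c) := h1
    _ = (b ⊔ a ⊓ (b ⊔ c)) ⊓ (a ⊔ c) := by rw [sup_comm]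
    _ = ((b ⊔ a) ⊓ (b ⊔ c)) ⊓ (a ⊔ c) := by rw [h2]
    _ = (a ⊔ b) ⊓ (b ⊔ c) ⊓ (a ⊔ c) := by rw [sup_comm b a]

private lemma m3_d_le_e (a b c : α) :
    a ⊓ b ⊔ b ⊓ c ⊔ a ⊓ c ≤ (a ⊔ b) ⊓ (b ⊔ c) ⊓ (a ⊔ c) := by
  refine sup_le (sup_le ?_ ?_) ?_
  · exact le_inf (le_inf (inf_le_left.trans le_sup_left) (inf_le_right.trans le_sup_left))
      (inf_le_left.trans le_sup_left)
  · exact le_inf (le_inf (inf_le_left.trans le_sup_right) (inf_le_left.trans le_sup_left))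
      (inf_le_right.trans le_sup_right)
  · exact le_inf (le_inf (inf_le_left.trans le_sup_left) (inf_le_right.trans le_sup_right))
      (inf_le_left.trans le_sup_left)

/-- The M3 construction: meets and joins of a pair of the three middle elements. -/
private lemma m3_pair (a b c : α) :
    ((a ⊓ b ⊔ b ⊓ c ⊔ a ⊓ c) ⊔ a ⊓ ((a ⊔ b) ⊓ (b ⊔ c) ⊓ (a ⊔ c)))
      ⊓ ((a ⊓ b ⊔ b ⊓ c ⊔ a ⊓ c) ⊔ b ⊓ ((a ⊔ b) ⊓ (b ⊔ c) ⊓ (a ⊔ c)))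
      = a ⊓ b ⊔ b ⊓ c ⊔ a ⊓ c ∧
    ((a ⊓ b ⊔ b ⊓ c ⊔ a ⊓ c) ⊔ a ⊓ ((a ⊔ b) ⊓ (b ⊔ c) ⊓ (a ⊔ c)))
      ⊔ ((a ⊓ b ⊔ b ⊓ c ⊔ a ⊓ c) ⊔ b ⊓ ((a ⊔ b) ⊓ (b ⊔ c) ⊓ (a ⊔ c)))
      = (a ⊔ b) ⊓ (b ⊔ c) ⊓ (a ⊔ c) := by
  set d := a ⊓ b ⊔ b ⊓ c ⊔ a ⊓ c with hd
  set e := (a ⊔ b) ⊓ (b ⊔ c) ⊓ (a ⊔ c) with he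
  have hde : d ≤ e := m3_d_le_e a b c
  have hae : a ⊓ e = a ⊓ (b ⊔ c) := by
    refine le_antisymm (inf_le_inf_left a (inf_le_left.trans inf_le_right)) ?_
    refine le_inf inf_le_left (le_inf (le_inf ?_ inf_le_right) ?_)
    · exact inf_le_left.trans le_sup_left
    · exact inf_le_left.trans le_sup_left
  have hbe : b ⊓ e = b ⊓ (a ⊔ c) := by
    refine le_antisymm ?_ ?_
    · refine le_inf inf_le_left ?_
      calc b ⊓ e ≤ e := inf_le_right
        _ ≤ (a ⊔ b) ⊓ (a ⊔ c) := inf_le_inf inf_le_left le_rfl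
        _ ≤ a ⊔ c := inf_le_right
    · refine le_inf inf_le_left (le_inf (le_inf ?_ ?_) inf_le_right)
      · exact inf_le_left.trans le_sup_right
      · exact inf_le_left.trans le_sup_left
  have had : a ⊔ d = a ⊔ b ⊓ c := by
    refine le_antisymm (sup_le le_sup_left ?_) (sup_le le_sup_left ?_)
    · exact sup_le (sup_le (inf_le_left.trans le_sup_left) le_sup_right)
        (inf_le_left.trans le_sup_left)
    · exact (le_sup_right (a := a ⊓ b)).trans ((le_sup_left (b := a ⊓ c)).trans le_sup_right)
  have hbd : b ⊔ d = b ⊔ a ⊓ c := by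
    refine le_antisymm (sup_le le_sup_left ?_) (sup_le le_sup_left ?_)
    · exact sup_le (sup_le (inf_le_right.trans le_sup_left) (inf_le_left.trans le_sup_left))
        le_sup_right
    · exact (le_sup_right (a := a ⊓ b ⊔ b ⊓ c)).trans le_sup_right
  have ha1 : d ⊔ a ⊓ e = (a ⊔ b ⊓ c) ⊓ e := by
    rw [← sup_inf_assoc_of_le a hde, sup_comm d a, had]
  have hb1 : d ⊔ b ⊓ e = (b ⊔ a ⊓ c) ⊓ e := by
    rw [← sup_inf_assoc_of_le b hde, sup_comm d b, hbd]
  constructor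
  · rw [ha1, hb1]
    calc (a ⊔ b ⊓ c) ⊓ e ⊓ ((b ⊔ a ⊓ c) ⊓ e)
        = (a ⊔ b ⊓ c) ⊓ (b ⊔ a ⊓ c) ⊓ e := by rw [← inf_inf_distrib_right]
      _ = d ⊓ e := by rw [m3_inf_aux, hd]
      _ = d := inf_eq_left.mpr hde
  · calc d ⊔ a ⊓ e ⊔ (d ⊔ b ⊓ e) = d ⊔ (a ⊓ e ⊔ b ⊓ e) := by rw [← sup_sup_distrib_left]
      _ = d ⊔ (a ⊓ (b ⊔ c) ⊔ b ⊓ (a ⊔ c)) := by rw [hae, hbe]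
      _ = d ⊔ e := by rw [m3_sup_aux, he]
      _ = e := sup_eq_right.mpr hde

omit [IsModularLattice α] in
private lemma m3_d_swap (a b c : α) :
    a ⊓ c ⊔ c ⊓ b ⊔ a ⊓ b = a ⊓ b ⊔ b ⊓ c ⊔ a ⊓ c := by
  rw [inf_comm c b]; ac_rfl

omit [IsModularLattice α] in
private lemma m3_e_swap (a b c : α) :
    (a ⊔ c) ⊓ (c ⊔ b) ⊓ (a ⊔ b) = (a ⊔ b) ⊓ (b ⊔ c) ⊓ (a ⊔ c) := by
  rw [sup_comm c b]; ac_rfl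

omit [IsModularLattice α] in
private lemma m3_d_rot (a b c : α) :
    b ⊓ c ⊔ c ⊓ a ⊔ b ⊓ a = a ⊓ b ⊔ b ⊓ c ⊔ a ⊓ c := by
  rw [inf_comm c a, inf_comm b a]; ac_rfl

omit [IsModularLattice α] in
private lemma m3_e_rot (a b c : α) :
    (b ⊔ c) ⊓ (c ⊔ a) ⊓ (b ⊔ a) = (a ⊔ b) ⊓ (b ⊔ c) ⊓ (a ⊔ c) := by
  rw [sup_comm c a, sup_comm b a]; ac_rfl

end ModularM3

/-- The "twisted diagonal" ideal: elements congruent mod `D` to `x + lam • y` where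
`x ∈ X`, `y ∈ Y` and `x + y ∈ Z`. -/
private def twistIdeal (F : Type*) [Field F] (L : Type*) [LieRing L] [LieAlgebra F L]
    (X Y Z D : LieIdeal F L) (lam : F) : LieIdeal F L where
  carrier := {v | ∃ x ∈ X, ∃ y ∈ Y, x + y ∈ Z ∧ v - (x + lam • y) ∈ D}
  zero_mem' := ⟨0, X.zero_mem, 0, Y.zero_mem, by simpa using Z.zero_mem,
    by simpa using D.zero_mem⟩
  add_mem' := by
    rintro v w ⟨x, hx, y, hy, hz, hd⟩ ⟨x', hx', y', hy', hz', hd'⟩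
    refine ⟨x + x', X.add_mem hx hx', y + y', Y.add_mem hy hy', ?_, ?_⟩
    · have : x + x' + (y + y') = (x + y) + (x' + y') := by abel
      rw [this]; exact Z.add_mem hz hz'
    · have : v + w - (x + x' + lam • (y + y'))
          = (v - (x + lam • y)) + (w - (x' + lam • y')) := by
        rw [smul_add]; abel
      rw [this]; exact D.add_mem hd hd'
  smul_mem' := by
    rintro c v ⟨x, hx, y, hy, hz, hd⟩
    refine ⟨c • x, X.smul_mem c hx, c • y, Y.smul_mem c hy, ?_, ?_⟩
    · rw [← smul_add]; exact Z.smul_mem c hz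
    · have : c • v - (c • x + lam • (c • y)) = c • (v - (x + lam • y)) := by
        rw [smul_sub, smul_add, smul_comm lam c]
      rw [this]; exact D.smul_mem c hd
  lie_mem := by
    rintro l v ⟨x, hx, y, hy, hz, hd⟩
    refine ⟨⁅l, x⁆, X.lie_mem hx, ⁅l, y⁆, Y.lie_mem hy, ?_, ?_⟩
    · rw [← lie_add]; exact Z.lie_mem hz
    · have : ⁅l, v⁆ - (⁅l, x⁆ + lam • ⁅l, y⁆) = ⁅l, v - (x + lam • y)⁆ := by
        rw [lie_sub, lie_add, lie_smul]
      rw [this]; exact D.lie_mem hd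

private lemma mem_twistIdeal {F : Type*} [Field F] {L : Type*} [LieRing L] [LieAlgebra F L]
    {X Y Z D : LieIdeal F L} {lam : F} {v : L} :
    v ∈ twistIdeal F L X Y Z D lam ↔
      ∃ x ∈ X, ∃ y ∈ Y, x + y ∈ Z ∧ v - (x + lam • y) ∈ D := Iff.rfl

/-- Given an M3 diamond of Lie ideals, the twisted diagonals are pairwise distinct. -/
private lemma twistIdeal_injective (F : Type*) [Field F] (L : Type*) [LieRing L] [LieAlgebra F L]
    (X Y Z D : LieIdeal F L) (hXY : X ⊓ Y = D) (hXZ : X ⊓ Z = D) (hYZ : Y ⊓ Z = D)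
    (hZXY : Z ≤ X ⊔ Y) (hDZ : D ≤ Z) (hne : Z ≠ D) :
    Function.Injective (twistIdeal F L X Y Z D) := by
  have hDX : D ≤ X := hXY ▸ inf_le_left
  have hDY : D ≤ Y := hXY ▸ inf_le_right
  intro lam mu hN
  by_contra hlm
  obtain ⟨z, hzZ, hzD⟩ := SetLike.exists_of_lt (lt_of_le_of_ne hDZ (Ne.symm hne))
  obtain ⟨x, hx, y, hy, hxy⟩ := (LieSubmodule.mem_sup X Y z).mp (hZXY hzZ)
  have hvlam : x + lam • y ∈ twistIdeal F L X Y Z D lam :=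
    ⟨x, hx, y, hy, hxy.symm ▸ hzZ, by simpa using D.zero_mem⟩
  rw [hN] at hvlam
  obtain ⟨x', hx', y', hy', hz', hd'⟩ := hvlam
  -- hd' : x + lam • y - (x' + mu • y') ∈ D
  have h1 : lam • y - mu • y' ∈ Y := Y.sub_mem (Y.smul_mem _ hy) (Y.smul_mem _ hy')
  have h2 : lam • y - mu • y' ∈ X := by
    have heq : lam • y - mu • y' = (x + lam • y - (x' + mu • y')) - (x - x') := by abel
    rw [heq]; exact X.sub_mem (hDX hd') (X.sub_mem hx hx')
  have h3 : lam • y - mu • y' ∈ D := hXY ▸ (LieSubmodule.mem_inf _ _ _).mpr ⟨h2, h1⟩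
  have h4 : x - x' ∈ D := by
    have heq : x - x' = (x + lam • y - (x' + mu • y')) - (lam • y - mu • y') := by abel
    rw [heq]; exact D.sub_mem hd' h3
  have h5 : y - y' ∈ Z := by
    have heq : y - y' = ((x + y) - (x' + y')) - (x - x') := by abel
    rw [heq]
    exact Z.sub_mem (Z.sub_mem (hxy.symm ▸ hzZ) hz') (hDZ h4)
  have h6 : y - y' ∈ Y := Y.sub_mem hy hy'
  have h7 : y - y' ∈ D := hYZ ▸ (LieSubmodule.mem_inf _ _ _).mpr ⟨h6, h5⟩
  have h8 : (lam - mu) • y' ∈ D := by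
    have heq : (lam - mu) • y' = (lam • y - mu • y') - lam • (y - y') := by
      rw [sub_smul, smul_sub]; abel
    rw [heq]; exact D.sub_mem h3 (D.smul_mem _ h7)
  have h9 : y' ∈ D := by
    have : (lam - mu)⁻¹ • ((lam - mu) • y') = y' := by
      rw [smul_smul, inv_mul_cancel₀ (sub_ne_zero.mpr hlm), one_smul]
    rw [← this]; exact D.smul_mem _ h8
  have h10 : y ∈ D := by
    have : y - y' + y' = y := by abel
    rw [← this]; exact D.add_mem h7 h9
  have h11 : x ∈ Z := by
    have : z - y = x := by rw [← hxy]; abel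
    rw [← this]; exact Z.sub_mem hzZ (hDZ h10)
  have h12 : x ∈ D := hXZ ▸ (LieSubmodule.mem_inf _ _ _).mpr ⟨hx, h11⟩
  exact hzD (hxy ▸ D.add_mem h12 h10)

/-- If a finite-dimensional Lie algebra over a field of characteristic zero has only
finitely many Lie ideals, then its lattice of Lie ideals is distributive. -/
theorem lieIdeal_lattice_distributive
    (F : Type*) [Field F] [CharZero F]
    (L : Type*) [LieRing L] [LieAlgebra F L] [FiniteDimensional F L]
    [Finite (LieIdeal F L)] :
    ∀ I J K : LieIdeal F L, I ⊓ (J ⊔ K) = (I ⊓ J) ⊔ (I ⊓ K) := by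
  intro a b c
  by_contra hcon
  set d := a ⊓ b ⊔ b ⊓ c ⊔ a ⊓ c with hd
  set e := (a ⊔ b) ⊓ (b ⊔ c) ⊓ (a ⊔ c) with he
  have hde : d ≤ e := m3_d_le_e a b c
  -- if d = e, distributivity would hold at (a, b, c)
  have hne_de : d ≠ e := by
    intro h
    apply hcon
    refine le_antisymm ?_ ?_
    · have h0 : a ⊓ (b ⊔ c) ≤ e := by
        refine le_inf (le_inf ?_ inf_le_right) ?_
        · exact inf_le_left.trans le_sup_left
        · exact inf_le_left.trans le_sup_left
      have h1 : a ⊓ (b ⊔ c) ≤ a ⊓ d := le_inf inf_le_left (h ▸ h0)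
      have h2 : a ⊓ d ≤ a ⊓ b ⊔ a ⊓ c := by
        have hx : a ⊓ b ⊔ a ⊓ c ≤ a := sup_le inf_le_left inf_le_left
        have hmod : (a ⊓ b ⊔ a ⊓ c ⊔ b ⊓ c) ⊓ a = a ⊓ b ⊔ a ⊓ c ⊔ b ⊓ c ⊓ a :=
          sup_inf_assoc_of_le (b ⊓ c) hx
        have hdr : d = a ⊓ b ⊔ a ⊓ c ⊔ b ⊓ c := by
          rw [hd, sup_assoc, sup_comm (b ⊓ c) (a ⊓ c), ← sup_assoc]
        calc a ⊓ d = (a ⊓ b ⊔ a ⊓ c ⊔ b ⊓ c) ⊓ a := by rw [hdr, inf_comm]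
          _ = a ⊓ b ⊔ a ⊓ c ⊔ b ⊓ c ⊓ a := hmod
          _ ≤ a ⊓ b ⊔ a ⊓ c := by
              refine sup_le le_rfl ?_
              exact le_sup_left.trans' (le_inf inf_le_right (inf_le_left.trans inf_le_left))
      exact h1.trans h2
    · exact sup_le (inf_le_inf_left a le_sup_left) (inf_le_inf_left a le_sup_right)
  set A := d ⊔ a ⊓ e with hA
  set B := d ⊔ b ⊓ e with hB
  set C := d ⊔ c ⊓ e with hC
  obtain ⟨hAB_inf, hAB_sup⟩ := m3_pair a b c
  obtain ⟨hAC_inf', hAC_sup'⟩ := m3_pair a c b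
  obtain ⟨hBC_inf', hBC_sup'⟩ := m3_pair b c a
  rw [m3_d_swap, m3_e_swap] at hAC_inf' hAC_sup'
  rw [m3_d_rot, m3_e_rot] at hBC_inf' hBC_sup'
  have hAB_inf : A ⊓ B = d := hAB_inf
  have hAB_sup : A ⊔ B = e := hAB_sup
  have hAC_inf : A ⊓ C = d := hAC_inf'
  have hAC_sup : A ⊔ C = e := hAC_sup'
  have hBC_inf : B ⊓ C = d := hBC_inf'
  have hBC_sup : B ⊔ C = e := hBC_sup'
  have hdA : d ≤ A := le_sup_left
  have hdB : d ≤ B := le_sup_left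
  have hdC : d ≤ C := le_sup_left
  have hCe : C ≤ e := sup_le hde inf_le_right
  have hCne : C ≠ d := by
    intro h
    apply hne_de
    have hA_e : A = e := by rw [← hAC_sup, h, sup_eq_left.mpr hdA]
    have hB_d : B = d := by
      rw [← hAB_inf, hA_e, inf_eq_right.mpr (sup_le hde inf_le_right)]
    have : e = d := by rw [← hBC_sup, hB_d, h, sup_idem]
    exact this.symm
  have hinj : Function.Injective (twistIdeal F L A B C d) :=
    twistIdeal_injective F L A B C d hAB_inf hAC_inf hBC_inf (hAB_sup ▸ hCe) hdC hCne
  have : Finite F := Finite.of_injective _ hinj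
  have : Infinite F := Infinite.of_injective (Nat.cast : ℕ → F) Nat.cast_injective
  exact not_finite F
end

section
/- Let F be a field of characteristic zero and L a finite-dimensional Lie algebra over F with only finitely many Lie ideals. Then the lattice of ideals of L contains no diamond sublattice: there do not exist Lie ideals K, R, P₁, P₂, P₃ of L with P₁, P₂, P₃ pairwise distinct, Pᵢ ⊓ Pⱼ = K and Pᵢ ⊔ Pⱼ = R for all i ≠ j, and K < Pᵢ < R for each i. -/
/-- The ideal lattice of a finite-dimensional Lie algebra over a field of characteristic
zero with finitely many ideals contains no diamond (`M₃`) sublattice. -/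
theorem lieIdeal_lattice_no_diamond
    (F : Type*) [Field F] [CharZero F]
    (L : Type*) [LieRing L] [LieAlgebra F L] [FiniteDimensional F L]
    [Finite (LieIdeal F L)] :
    ¬ ∃ (K R : LieIdeal F L) (P : Fin 3 → LieIdeal F L),
        (∀ i j, i ≠ j → P i ≠ P j) ∧
        (∀ i j, i ≠ j → P i ⊓ P j = K) ∧
        (∀ i j, i ≠ j → P i ⊔ P j = R) ∧
        (∀ i, K < P i ∧ P i < R) := by
  rintro ⟨K, R, P, hne, hinf, hsup, hKR⟩
  have h01 : P 0 ⊓ P 1 = K := hinf 0 1 (by decide)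
  have h20 : P 2 ⊓ P 0 = K := hinf 2 0 (by decide)
  have h21 : P 2 ⊓ P 1 = K := hinf 2 1 (by decide)
  have hR : P 0 ⊔ P 1 = R := hsup 0 1 (by decide)
  have hK2 : K < P 2 := (hKR 2).1
  have h2R : P 2 ≤ P 0 ⊔ P 1 := hR ▸ le_of_lt (hKR 2).2
  have hK0 : K ≤ P 0 := h01 ▸ inf_le_left
  have hK1 : K ≤ P 1 := h01 ▸ inf_le_right
  have hKP2 : K ≤ P 2 := le_of_lt hK2
  -- The family of "graph" ideals
  let S : F → LieIdeal F L := fun c =>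
    { carrier := {z | ∃ x ∈ P 0, ∃ y ∈ P 1, x + y ∈ P 2 ∧ z = x + c • y}
      add_mem' := by
        rintro a b ⟨x, hx, y, hy, hxy, rfl⟩ ⟨x', hx', y', hy', hxy', rfl⟩
        exact ⟨x + x', add_mem hx hx', y + y', add_mem hy hy',
          by simpa [add_add_add_comm] using add_mem hxy hxy', by module⟩
      zero_mem' := ⟨0, zero_mem _, 0, zero_mem _, by simp, by simp⟩
      smul_mem' := by
        rintro t a ⟨x, hx, y, hy, hxy, rfl⟩
        exact ⟨t • x, Submodule.smul_mem _ t hx, t • y, Submodule.smul_mem _ t hy,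
          by simpa [smul_add] using Submodule.smul_mem _ t hxy, by module⟩
      lie_mem := by
        rintro ℓ a ⟨x, hx, y, hy, hxy, rfl⟩
        exact ⟨⁅ℓ, x⁆, (P 0).lie_mem hx, ⁅ℓ, y⁆, (P 1).lie_mem hy,
          by simpa [lie_add] using (P 2).lie_mem hxy,
          by simp [lie_add, lie_smul]⟩ }
  have hmem : ∀ (c : F) (z : L), z ∈ S c ↔
      ∃ x ∈ P 0, ∃ y ∈ P 1, x + y ∈ P 2 ∧ z = x + c • y := fun _ _ => Iff.rfl
  have hinj : Function.Injective S := by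
    intro c d hcd
    by_contra hne'
    -- we show P 2 ≤ P 0, contradicting K < P 2 = P 2 ⊓ P 0 = K
    have hle : P 2 ≤ P 0 := by
      intro w hw
      obtain ⟨x, hx, y, hy, hdec⟩ := (LieSubmodule.mem_sup _ _ _).1 (h2R hw)
      have hw' : x + y ∈ P 2 := by rwa [hdec]
      have hc : x + c • y ∈ S c := (hmem c _).2 ⟨x, hx, y, hy, hw', rfl⟩
      rw [hcd] at hc
      obtain ⟨x', hx', y', hy', hxy', heq⟩ := (hmem d _).1 hc
      -- x - x' = d•y' - c•y ∈ P0 ⊓ P1 = K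
      have hdiff : x - x' = d • y' - c • y := by linear_combination (norm := module) heq
      have hxKmem : x - x' ∈ K := by
        rw [← h01]
        refine (LieSubmodule.mem_inf _ _ _).2 ⟨sub_mem hx hx', ?_⟩
        rw [hdiff]
        exact sub_mem (Submodule.smul_mem _ d hy') (Submodule.smul_mem _ c hy)
      -- y - y' ∈ P2 ∩ P1 = K
      have hyK : y - y' ∈ K := by
        rw [← h21]
        refine (LieSubmodule.mem_inf _ _ _).2 ⟨?_, sub_mem hy hy'⟩
        have h1 : (x + y) - (x' + y') ∈ P 2 := sub_mem hw' hxy'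
        have h2 : (x + y) - (x' + y') - (x - x') = y - y' := by module
        rw [← h2]
        exact sub_mem h1 (hKP2 hxKmem)
      -- (d - c) • y ∈ P 0
      have hdc : (d - c) • y ∈ P 0 := by
        have h3 : (d - c) • y = (x - x') + d • (y - y') := by
          rw [hdiff]; module
        rw [h3]
        exact add_mem (hK0 hxKmem) (Submodule.smul_mem _ d (hK0 hyK))
      have hdc0 : d - c ≠ 0 := sub_ne_zero.2 (Ne.symm hne')
      have hy0 : y ∈ P 0 := by
        have := Submodule.smul_mem (P 0).toSubmodule (d - c)⁻¹ hdc
        rwa [smul_smul, inv_mul_cancel₀ hdc0, one_smul] at this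
      have : w = x + y := hdec.symm
      rw [this]
      exact add_mem hx hy0
    have : P 2 = K := by
      rw [← h20, inf_eq_left.2 hle]
    exact hK2.ne' this
  exact absurd (Finite.of_injective S hinj) (by exact (inferInstance : Infinite F).not_finite)
end

section
/- Let F be a field of characteristic zero and L a finite-dimensional Lie algebra over F. If the lattice of Lie ideals of L is complemented, then the derived ideal L² = ⁅L,L⁆ and the center Z(L) are complementary ideals (L² ⊓ Z(L) = ⊥ and L² ⊔ Z(L) = ⊤), and the solvable radical of L equals its center (so L is the direct sum of the semisimple ideal L² and the abelian ideal Z(L)). -/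
/-!
If an ideal `I` has a complement `J`, then `⁅J, I⁆ ≤ J ⊓ I = ⊥`, so `⁅L, I⁆ = ⁅I, I⁆`: an abelian
ideal with a complement is central. Splitting the radical `R` as `⁅R, R⁆ ⊔ (J ⊓ R)` with `J` a
complement of `⁅R, R⁆` shows that `⁅R, R⁆` is perfect; being solvable, it vanishes, so `R` is
abelian and hence central. Finally, an ideal disjoint from `L²` is central, and a central ideal
with complement `J` forces `L² ≤ J`; these two facts make `L²` and `Z(L)` complementary.
-/

section

open LieAlgebra LieIdeal LieSubmodule

variable {R L : Type*} [CommRing R] [LieRing L] [LieAlgebra R L]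

namespace LieIdeal

theorem lie_top_eq_lie_self_of_isCompl {I J : LieIdeal R L} (h : IsCompl I J) :
    ⁅(⊤ : LieIdeal R L), I⁆ = ⁅I, I⁆ := by
  have hJI : ⁅J, I⁆ = ⊥ := le_bot_iff.mp (h.symm.disjoint (lie_le_left J I) (lie_le_right I J))
  rw [← h.sup_eq_top, sup_lie, hJI, sup_bot_eq]

theorem le_center_of_disjoint_derived {J : LieIdeal R L}
    (h : Disjoint ⁅(⊤ : LieIdeal R L), ⊤⁆ J) : J ≤ center R L :=
  (LieModule.le_max_triv_iff_bracket_eq_bot R L L).mpr <|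
    le_bot_iff.mp (h (mono_lie le_rfl le_top) (lie_le_right J ⊤))

theorem derived_le_of_codisjoint_of_le_center {I J : LieIdeal R L} (h : Codisjoint I J)
    (hI : I ≤ center R L) : ⁅(⊤ : LieIdeal R L), ⊤⁆ ≤ J :=
  calc ⁅(⊤ : LieIdeal R L), ⊤⁆ = ⁅I ⊔ J, ⊤⁆ := by rw [h.eq_top]
    _ = ⁅J, ⊤⁆ := by
      rw [sup_lie, lie_comm I ⊤, (LieModule.le_max_triv_iff_bracket_eq_bot R L L).mp hI,
        bot_sup_eq]
    _ ≤ J := lie_le_left J ⊤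

theorem lie_sup_self_eq_of_lie_eq_bot {D K : LieIdeal R L} (h : ⁅K, D ⊔ K⁆ = ⊥) :
    ⁅D ⊔ K, D ⊔ K⁆ = ⁅D, D⁆ := by
  have hDK : ⁅D, K⁆ = ⊥ :=
    le_bot_iff.mp (h ▸ (lie_comm D K).trans_le (mono_lie le_rfl le_sup_left))
  rw [sup_lie, h, sup_bot_eq, lie_sup, hDK, sup_bot_eq]

theorem lie_derived_eq_derived_of_isCompl {I J : LieIdeal R L} (h : IsCompl ⁅I, I⁆ J) :
    ⁅⁅I, I⁆, ⁅I, I⁆⁆ = ⁅I, I⁆ := by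
  have hsplit : ⁅I, I⁆ ⊔ J ⊓ I = I := by
    rw [← sup_inf_assoc_of_le J (lie_le_left I I), h.sup_eq_top, top_inf_eq]
  have hK : ⁅J ⊓ I, I⁆ = ⊥ :=
    le_bot_iff.mp (h.disjoint (mono_lie inf_le_right le_rfl)
      ((lie_le_left _ _).trans inf_le_left))
  have := lie_sup_self_eq_of_lie_eq_bot (D := ⁅I, I⁆) (K := J ⊓ I) (by rwa [hsplit])
  rw [hsplit] at this
  exact this.symm

theorem eq_bot_of_isSolvable_of_lie_self_eq_self {I : LieIdeal R L} [IsSolvable I]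
    (h : ⁅I, I⁆ = I) : I = ⊥ := by
  have hconst : ∀ k, derivedSeriesOfIdeal R L k I = I := by
    intro k
    induction k with
    | zero => rfl
    | succ k ih => rw [derivedSeriesOfIdeal_succ, ih, h]
  obtain ⟨k, hk⟩ := IsSolvable.solvable (R := R) (L := I)
  rw [← hconst k, ← derivedSeries_eq_bot_iff]
  exact hk

end LieIdeal

namespace LieAlgebra

variable [ComplementedLattice (LieIdeal R L)]

theorem radical_le_center [IsNoetherian R L] : radical R L ≤ center R L := by
  obtain ⟨J, hJ⟩ := exists_isCompl ⁅radical R L, radical R L⁆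
  have : IsSolvable (⁅radical R L, radical R L⁆ : LieIdeal R L) :=
    le_solvable_ideal_solvable (lie_le_left _ _) inferInstance
  have habelian : ⁅radical R L, radical R L⁆ = ⊥ :=
    eq_bot_of_isSolvable_of_lie_self_eq_self (lie_derived_eq_derived_of_isCompl hJ)
  obtain ⟨J', hJ'⟩ := exists_isCompl (radical R L)
  exact (LieModule.le_max_triv_iff_bracket_eq_bot R L L).mpr
    ((lie_top_eq_lie_self_of_isCompl hJ').trans habelian)

theorem radical_eq_center [IsNoetherian R L] : radical R L = center R L :=
  le_antisymm radical_le_center (center_le_radical R L)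

theorem isCompl_derived_center : IsCompl ⁅(⊤ : LieIdeal R L), ⊤⁆ (center R L) := by
  constructor
  · obtain ⟨J, hJ⟩ := exists_isCompl (⁅(⊤ : LieIdeal R L), ⊤⁆ ⊓ center R L)
    have hDJ := derived_le_of_codisjoint_of_le_center hJ.codisjoint inf_le_right
    exact disjoint_iff.mpr (le_bot_iff.mp (hJ.disjoint le_rfl (inf_le_left.trans hDJ)))
  · obtain ⟨J, hJ⟩ := exists_isCompl (⁅(⊤ : LieIdeal R L), ⊤⁆ ⊔ center R L)
    have hJZ := le_center_of_disjoint_derived (hJ.disjoint.mono_left le_sup_left)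
    have hJ_bot : J = ⊥ := le_bot_iff.mp (hJ.disjoint (hJZ.trans le_sup_right) le_rfl)
    exact codisjoint_iff.mpr (codisjoint_bot.mp (hJ_bot ▸ hJ.codisjoint))

end LieAlgebra

end

theorem complemented_lieIdeal_lattice_structure_general
    (F : Type*) [Field F]
    (L : Type*) [LieRing L] [LieAlgebra F L] [FiniteDimensional F L]
    [ComplementedLattice (LieIdeal F L)] :
    IsCompl (⁅(⊤ : LieIdeal F L), (⊤ : LieIdeal F L)⁆ : LieIdeal F L)
        (LieAlgebra.center F L) ∧
      LieAlgebra.radical F L = LieAlgebra.center F L :=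
  ⟨LieAlgebra.isCompl_derived_center, LieAlgebra.radical_eq_center⟩

/-- If the lattice of Lie ideals of a finite-dimensional Lie algebra over a field of
characteristic zero is complemented, then the derived ideal and the centre are
complementary ideals and the solvable radical equals the centre. -/
theorem complemented_lieIdeal_lattice_structure
    (F : Type*) [Field F] [CharZero F]
    (L : Type*) [LieRing L] [LieAlgebra F L] [FiniteDimensional F L]
    [ComplementedLattice (LieIdeal F L)] :
    IsCompl (⁅(⊤ : LieIdeal F L), (⊤ : LieIdeal F L)⁆ : LieIdeal F L)
        (LieAlgebra.center F L) ∧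
      LieAlgebra.radical F L = LieAlgebra.center F L :=
  complemented_lieIdeal_lattice_structure_general F L
end

section
/- Let F be a field of characteristic zero and L a finite-dimensional Lie algebra over F. If L has only finitely many Lie ideals and the lattice of Lie ideals of L is complemented, then the number of Lie ideals of L is 2^n for some natural number n. -/
/-!
For complementary Lie submodules `c` and `b` of `M`, the projection `π` onto `c` along `b` and
the complementary projection `π'` are Lie module maps, hence so is `π + t • π'` for every
scalar `t`. If `a` meets `b` trivially but is not contained in `c`, the images of `a` under these
maps are pairwise distinct. So when there are only finitely many submodules, every complement
of `b` is the largest submodule disjoint from `b`. In a complemented modular lattice this forces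
distributivity, so the lattice is a finite Boolean algebra, with `2 ^ #atoms` elements.
-/

def ComplementsArePseudocomplements (α : Type*) [Lattice α] [BoundedOrder α] : Prop :=
  ∀ ⦃a b c : α⦄, IsCompl c b → Disjoint a b → a ≤ c

namespace ComplementsArePseudocomplements

variable {α : Type*} [Lattice α] [BoundedOrder α] [IsModularLattice α] [ComplementedLattice α]

theorem le_of_le_sup (h : ComplementsArePseudocomplements α) {a b c : α}
    (hcb : Disjoint c b) (hab : Disjoint a b) (habc : a ≤ c ⊔ b) : a ≤ c := by
  -- enlarge `c` to a complement `c ⊔ d` of `b` whose trace on `c ⊔ b` is still `c`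
  obtain ⟨d, hd⟩ := exists_isCompl (c ⊔ b)
  have hmod : (c ⊔ d) ⊓ (c ⊔ b) = c := by
    rw [sup_inf_assoc_of_le d le_sup_left, inf_comm, hd.inf_eq_bot, sup_bot_eq]
  have hcompl : IsCompl (c ⊔ d) b := by
    constructor
    · rw [disjoint_iff_inf_le]
      calc (c ⊔ d) ⊓ b ≤ c ⊓ b :=
            le_inf ((inf_le_inf_left _ le_sup_right).trans hmod.le) inf_le_right
        _ ≤ ⊥ := hcb.le_bot
    · rw [codisjoint_iff, sup_right_comm, hd.sup_eq_top]
  calc a ≤ (c ⊔ d) ⊓ (c ⊔ b) := le_inf (h hcompl hab) habc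
    _ = c := hmod

theorem disjoint_sup_right (h : ComplementsArePseudocomplements α) {a b c : α}
    (hab : Disjoint a b) (hac : Disjoint a c) : Disjoint a (b ⊔ c) := by
  -- a relative complement `c ⊓ d` of `b ⊓ c` in `c` is a complement of `b` below `b ⊔ c`
  obtain ⟨d, hd⟩ := exists_isCompl (b ⊓ c)
  have hc : c = c ⊓ d ⊔ b ⊓ c := by
    rw [inf_sup_assoc_of_le d inf_le_right, hd.symm.sup_eq_top, inf_top_eq]
  have hsup : b ⊔ c ≤ c ⊓ d ⊔ b :=
    sup_le le_sup_right (hc.le.trans (sup_le_sup_left inf_le_left _))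
  have hdisj : Disjoint (c ⊓ d) b := by
    rw [disjoint_iff, inf_right_comm, inf_comm c b, hd.inf_eq_bot]
  have hle : a ⊓ (b ⊔ c) ≤ c ⊓ d :=
    h.le_of_le_sup hdisj (hab.mono_left inf_le_left) (inf_le_right.trans hsup)
  rw [disjoint_iff_inf_le]
  calc a ⊓ (b ⊔ c) ≤ a ⊓ c := le_inf inf_le_left (hle.trans inf_le_left)
    _ ≤ ⊥ := hac.le_bot

theorem inf_sup_le (h : ComplementsArePseudocomplements α) (x y z : α) :
    x ⊓ (y ⊔ z) ≤ x ⊓ y ⊔ x ⊓ z := by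
  set u := x ⊓ (y ⊔ z)
  set w := x ⊓ y ⊔ x ⊓ z
  have hwu : w ≤ u := sup_le (inf_le_inf_left _ le_sup_left) (inf_le_inf_left _ le_sup_right)
  -- `u ⊓ d` is a relative complement of `w` in `u`, and it is disjoint from `y` and `z`
  obtain ⟨d, hd⟩ := exists_isCompl w
  have hdisj {v : α} (hv : x ⊓ v ≤ w) : Disjoint (u ⊓ d) v := by
    rw [disjoint_iff_inf_le]
    calc u ⊓ d ⊓ v ≤ w ⊓ d :=
          le_inf
            ((le_inf (inf_le_left.trans (inf_le_left.trans inf_le_left)) inf_le_right).trans hv)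
            (inf_le_left.trans inf_le_right)
      _ ≤ ⊥ := hd.disjoint.le_bot
  have hud : u ⊓ d = ⊥ :=
    (h.disjoint_sup_right (hdisj le_sup_left) (hdisj le_sup_right)).eq_bot_of_le
      (inf_le_left.trans inf_le_right)
  calc u = u ⊓ (d ⊔ w) := by rw [hd.symm.sup_eq_top, inf_top_eq]
    _ = u ⊓ d ⊔ w := (inf_sup_assoc_of_le d hwu).symm
    _ ≤ w := by rw [hud, bot_sup_eq]

abbrev distribLattice (h : ComplementsArePseudocomplements α) : DistribLattice α :=
  .ofInfSupLe h.inf_sup_le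

end ComplementsArePseudocomplements

theorem BooleanAlgebra.nat_card_eq_two_pow_card_atoms {α : Type*} [BooleanAlgebra α] [Finite α] :
    Nat.card α = 2 ^ Nat.card {a : α // IsAtom a} := by
  classical
  have := Fintype.ofFinite α
  let := Fintype.toCompleteAtomicBooleanAlgebra α
  rw [Nat.card_congr CompleteAtomicBooleanAlgebra.toSetOfIsAtom.toEquiv, Nat.card_eq_fintype_card,
    Fintype.card_set, Nat.card_eq_fintype_card]

theorem ComplementsArePseudocomplements.exists_nat_card_eq_two_pow {α : Type*} [Lattice α]
    [BoundedOrder α] [IsModularLattice α] [ComplementedLattice α] [Finite α]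
    (h : ComplementsArePseudocomplements α) : ∃ n : ℕ, Nat.card α = 2 ^ n := by
  let := h.distribLattice
  let := DistribLattice.booleanAlgebraOfComplemented α
  exact ⟨_, BooleanAlgebra.nat_card_eq_two_pow_card_atoms⟩

namespace LieSubmodule

variable {R L M : Type*} [CommRing R] [LieRing L] [AddCommGroup M] [Module R M]
  [LieRingModule L M] {b c : LieSubmodule R L M}

noncomputable def projection (h : IsCompl c b) : M →ₗ⁅R,L⁆ M where
  __ := (c : Submodule R M).projection b (isCompl_toSubmodule.mpr h)
  map_lie' {y x} := by
    have h' := isCompl_toSubmodule.mpr h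
    dsimp only [AddHom.toFun_eq_coe, LinearMap.coe_toAddHom]
    conv_lhs => rw [← Submodule.projection_add_projection_eq_self h' x]
    rw [lie_add, map_add, Submodule.projection_apply_of_mem_left h'
      (c.lie_mem (Submodule.projection_apply_mem h' x)),
      Submodule.projection_apply_of_mem_right h'
        (b.lie_mem (Submodule.projection_apply_mem h'.symm x)), add_zero]

theorem projection_apply_eq_zero_iff (h : IsCompl c b) {x : M} : projection h x = 0 ↔ x ∈ b :=
  Submodule.projection_apply_eq_zero_iff _

@[simp]
theorem projection_projection (h : IsCompl c b) (x : M) :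
    projection h (projection h x) = projection h x :=
  Submodule.projection_apply_of_mem_left _ (Submodule.projection_apply_mem _ x)

@[simp]
theorem projection_projection_symm (h : IsCompl c b) (x : M) :
    projection h (projection h.symm x) = 0 :=
  Submodule.projection_apply_of_mem_right _ (Submodule.projection_apply_mem _ x)

theorem infinite_of_isCompl_of_disjoint [LieAlgebra R L] [LieModule R L M] [IsCancelMulZero R]
    [Infinite R] [Module.IsTorsionFree R M]
    {a : LieSubmodule R L M} (hcb : IsCompl c b) (hab : Disjoint a b) (hac : ¬ a ≤ c) :
    Infinite (LieSubmodule R L M) := by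
  set π := projection hcb
  set π' := projection hcb.symm
  obtain ⟨z, hza, hzc⟩ := SetLike.not_le_iff_exists.mp hac
  have hπ'z : π' z ≠ 0 := mt (projection_apply_eq_zero_iff hcb.symm).mp hzc
  refine Infinite.of_injective (fun t : R ↦ map (π + t • π') a)
    fun s t (hst : map (π + s • π') a = map (π + t • π') a) ↦ ?_
  have hmem : (π + s • π') z ∈ map (π + t • π') a := hst ▸ mem_map_of_mem hza
  obtain ⟨w, hwa, hw⟩ := (mem_map _).mp hmem
  simp only [LieModuleHom.add_apply, LieModuleHom.smul_apply] at hw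
  have hwz : w - z ∈ a ⊓ b := by
    refine ⟨sub_mem hwa hza, (projection_apply_eq_zero_iff hcb).mp ?_⟩
    simpa [π, π', sub_eq_zero] using congr(π $hw)
  rw [hab.eq_bot, mem_bot, sub_eq_zero] at hwz
  subst hwz
  exact smul_left_injective R hπ'z (add_left_cancel hw).symm

theorem complementsArePseudocomplements [LieAlgebra R L] [LieModule R L M] [IsCancelMulZero R]
    [Infinite R] [Module.IsTorsionFree R M] [Finite (LieSubmodule R L M)] :
    ComplementsArePseudocomplements (LieSubmodule R L M) := fun _ _ _ hcb hab ↦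
  by_contra fun hac ↦ (infinite_of_isCompl_of_disjoint hcb hab hac).false

end LieSubmodule

theorem card_lieIdeal_eq_two_pow_of_complemented_general
    (F : Type*) [Field F] [CharZero F]
    (L : Type*) [LieRing L] [LieAlgebra F L]
    [Finite (LieIdeal F L)] [ComplementedLattice (LieIdeal F L)] :
    ∃ n : ℕ, Nat.card (LieIdeal F L) = 2 ^ n :=
  LieSubmodule.complementsArePseudocomplements.exists_nat_card_eq_two_pow

/-- A finite-dimensional Lie algebra over a field of characteristic zero with finitely
many Lie ideals whose ideal lattice is complemented has exactly `2 ^ n` ideals for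
some natural number `n`. -/
theorem card_lieIdeal_eq_two_pow_of_complemented
    (F : Type*) [Field F] [CharZero F]
    (L : Type*) [LieRing L] [LieAlgebra F L] [FiniteDimensional F L]
    [Finite (LieIdeal F L)] [ComplementedLattice (LieIdeal F L)] :
    ∃ n : ℕ, Nat.card (LieIdeal F L) = 2 ^ n :=
  card_lieIdeal_eq_two_pow_of_complemented_general F L
end

section
/- Let F be a field of characteristic zero, L a Lie algebra over F, and M a finite-dimensional Lie module over L. If the lattice of Lie submodules of M is finite and complemented, then M is a semisimple Lie module (every Lie submodule has a complementary Lie submodule and M is a sum of irreducible submodules), and no two distinct irreducible Lie submodules of M are isomorphic as Lie L-modules. -/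
/-!
If `e : N ≃ N'` is an isomorphism between two distinct, hence disjoint, atoms, then the
graphs `{n + c • e n | n ∈ N}` of the maps `c • e` are Lie submodules which are pairwise
distinct as `c` ranges over the infinite field `F`, contradicting finiteness of the lattice.
Semisimplicity itself is the general fact that a complemented compactly generated lattice is
atomistic.
-/

open Function

section Graph

variable {R L M : Type*} [CommRing R] [LieRing L] [LieAlgebra R L]
  [AddCommGroup M] [Module R M] [LieRingModule L M] [LieModule R L M]

lemma LieSubmodule.range_incl_add_smul_comp_injective [IsCancelMulZero R]
    [Module.IsTorsionFree R M] {N N' : LieSubmodule R L M} (hNN' : Disjoint N N')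
    {f : N →ₗ⁅R,L⁆ N'} (hf : f ≠ 0) :
    Injective fun c : R ↦ (N.incl + c • N'.incl.comp f).range := by
  intro c c' (hcc' : (N.incl + c • N'.incl.comp f).range = (N.incl + c' • N'.incl.comp f).range)
  obtain ⟨x, hx⟩ : ∃ x, f x ≠ 0 := by
    by_contra! h
    exact hf (LieModuleHom.ext h)
  obtain ⟨y, hy⟩ : (x : M) + c • (f x : M) ∈ (N.incl + c' • N'.incl.comp f).range :=
    hcc' ▸ ⟨x, rfl⟩
  simp only [LieModuleHom.add_apply, LieModuleHom.smul_apply, LieModuleHom.coe_comp,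
    comp_apply, LieSubmodule.incl_apply] at hy
  have hyx : y = x := by
    have hmem : (y : M) - x ∈ N ⊓ N' := by
      refine ⟨N.sub_mem y.2 x.2, ?_⟩
      rw [show (y : M) - x = c • (f x : M) - c' • (f y : M) by
        linear_combination (norm := module) hy]
      exact N'.sub_mem (N'.smul_mem c (f x).2) (N'.smul_mem c' (f y).2)
    rw [hNN'.eq_bot, LieSubmodule.mem_bot, sub_eq_zero] at hmem
    exact Subtype.ext hmem
  subst hyx
  have hfx : (f y : M) ≠ 0 := by simpa using hx
  exact smul_left_injective R hfx (add_left_cancel hy).symm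

lemma LieSubmodule.infinite_of_disjoint_of_equiv [IsCancelMulZero R] [Infinite R]
    [Module.IsTorsionFree R M] {N N' : LieSubmodule R L M} (hNN' : Disjoint N N') (hN : N ≠ ⊥)
    (e : N ≃ₗ⁅R,L⁆ N') : Infinite (LieSubmodule R L M) := by
  have hN : Nontrivial N := (LieSubmodule.nontrivial_iff_ne_bot R L M).mpr hN
  have he : e.toLieModuleHom ≠ 0 := fun he ↦ by
    obtain ⟨x, hx⟩ := exists_ne (0 : N)
    exact hx (e.injective (by simpa using LieModuleHom.congr_fun he x))
  exact Infinite.of_injective _ (range_incl_add_smul_comp_injective hNN' he)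

end Graph

theorem semisimple_of_finite_complemented_lieSubmodule_lattice_general
    (F : Type*) [Field F] [CharZero F]
    (L : Type*) [LieRing L] [LieAlgebra F L]
    (M : Type*) [AddCommGroup M] [Module F M]
    [LieRingModule L M] [LieModule F L M]
    [Finite (LieSubmodule F L M)] [ComplementedLattice (LieSubmodule F L M)] :
    (∀ N : LieSubmodule F L M, ∃ N' : LieSubmodule F L M, IsCompl N N') ∧
      sSup {N : LieSubmodule F L M | IsAtom N} = ⊤ ∧
      ∀ N N' : LieSubmodule F L M, IsAtom N → IsAtom N' → N ≠ N' →
        IsEmpty ((N : LieSubmodule F L M) ≃ₗ⁅F,L⁆ N') := by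
  refine ⟨exists_isCompl, sSup_atoms_eq_top, fun N N' hN hN' hne ↦ ⟨fun e ↦ ?_⟩⟩
  have := LieSubmodule.infinite_of_disjoint_of_equiv (hN.disjoint_of_ne hN' hne) hN.1 e
  exact not_finite (LieSubmodule F L M)

/-- If the lattice of Lie submodules of a finite-dimensional Lie module `M` over a Lie
algebra over a field of characteristic zero is finite and complemented, then `M` is a
semisimple Lie module (it is the sum of its irreducible Lie submodules) and no two
distinct irreducible Lie submodules of `M` are isomorphic as Lie modules. -/
theorem semisimple_of_finite_complemented_lieSubmodule_lattice
    (F : Type*) [Field F] [CharZero F]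
    (L : Type*) [LieRing L] [LieAlgebra F L]
    (M : Type*) [AddCommGroup M] [Module F M] [FiniteDimensional F M]
    [LieRingModule L M] [LieModule F L M]
    [Finite (LieSubmodule F L M)] [ComplementedLattice (LieSubmodule F L M)] :
    (∀ N : LieSubmodule F L M, ∃ N' : LieSubmodule F L M, IsCompl N N') ∧
      sSup {N : LieSubmodule F L M | IsAtom N} = ⊤ ∧
      ∀ N N' : LieSubmodule F L M, IsAtom N → IsAtom N' → N ≠ N' →
        IsEmpty ((N : LieSubmodule F L M) ≃ₗ⁅F,L⁆ N') :=
  semisimple_of_finite_complemented_lieSubmodule_lattice_general F L M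
end

section
/- Let F be a field of characteristic zero and L a finite-dimensional Lie algebra over F. Let S be a Lie subalgebra of L that is semisimple as a Lie algebra and is a vector-space complement of the solvable radical Rad(L): the underlying subspace of S and the underlying subspace of Rad(L) are complementary submodules of L. Then every Lie ideal I of L decomposes as I = (I ∩ S) ⊕ (I ∩ Rad(L)); that is, the underlying subspace of I equals the sum of the subspaces I ∩ S and I ∩ Rad(L), and moreover ⁅I ∩ S, Rad(L)⁆ ⊆ I ∩ Rad(L). -/
/-!
The projection `M = S ∩ (I + Rad L)` of `I` to `S` is an ideal of `S`, hence perfect since `S` is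
semisimple. As `⁅I + J, I + J⁆ ⊆ I + ⁅J, J⁆`, the equality `M = ⁅M, M⁆` pushes `M` into `I + D`
for every term `D` of the derived series of the radical, so `M ⊆ I` because the radical is
solvable. The modular law then splits `I` along `L = S ⊕ Rad L`.
-/

theorem eq_inf_sup_inf_of_codisjoint {α : Type*} [Lattice α] [OrderTop α] [IsModularLattice α]
    {a b x : α}
    (hab : Codisjoint a b) (hx : (x ⊔ b) ⊓ a ≤ x) : x = x ⊓ a ⊔ x ⊓ b := by
  have hle : x ≤ x ⊓ a ⊔ b := calc
    x ≤ (x ⊔ b) ⊓ (a ⊔ b) := le_inf le_sup_left (le_top.trans hab.eq_top.ge)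
    _ = (x ⊔ b) ⊓ a ⊔ b := IsModularLattice.sup_inf_sup_assoc
    _ ≤ x ⊓ a ⊔ b := sup_le_sup_right (le_inf hx inf_le_right) b
  calc x = x ⊓ (x ⊓ a ⊔ b) := (inf_eq_left.mpr hle).symm
    _ = x ⊓ a ⊔ x ⊓ b := by rw [inf_comm, sup_inf_assoc_of_le _ inf_le_left, inf_comm b]

namespace LieIdeal

variable {R L K : Type*} [CommRing R] [LieRing L] [LieAlgebra R L] [LieRing K] [LieAlgebra R K]

theorem lie_sup_self_le (I J : LieIdeal R L) : ⁅I ⊔ J, I ⊔ J⁆ ≤ I ⊔ ⁅J, J⁆ := by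
  rw [LieSubmodule.sup_lie, LieSubmodule.lie_sup, LieSubmodule.lie_sup]
  exact sup_le (sup_le (le_sup_of_le_left (LieSubmodule.lie_le_right I I))
    (le_sup_of_le_left (LieSubmodule.lie_le_left I J)))
    (sup_le_sup_right (LieSubmodule.lie_le_right I J) _)

theorem lie_self_eq_of_isSemisimple [LieAlgebra.IsSemisimple R L] (I : LieIdeal R L) :
    ⁅I, I⁆ = I := by
  -- in the Boolean algebra of ideals, `I ⊓ ⁅I, I⁆ᶜ` is an abelian ideal, hence `⊥`
  refine le_antisymm (LieSubmodule.lie_le_left I I)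
    (disjoint_compl_right_iff.mp (disjoint_iff.mpr ?_))
  apply (LieAlgebra.hasTrivialRadical_iff_no_abelian_ideals R L).mp inferInstance
  rw [LieSubmodule.lie_abelian_iff_lie_self_eq_bot, eq_bot_iff, ← inf_compl_self ⁅I, I⁆]
  exact le_inf (LieSubmodule.mono_lie inf_le_left inf_le_left)
    ((LieSubmodule.lie_le_left _ _).trans inf_le_right)

theorem le_comap_sup_derivedSeriesOfIdeal (f : K →ₗ⁅R⁆ L) {M : LieIdeal R K} (hM : ⁅M, M⁆ = M)
    {I J : LieIdeal R L} (h : M ≤ comap f (I ⊔ J)) (k : ℕ) :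
    M ≤ comap f (I ⊔ LieAlgebra.derivedSeriesOfIdeal R L k J) := by
  induction k with
  | zero => simpa using h
  | succ k ih =>
    rw [← hM, LieAlgebra.derivedSeriesOfIdeal_succ]
    exact (LieSubmodule.mono_lie ih ih).trans
      ((comap_bracket_le f).trans (comap_mono (lie_sup_self_le _ _)))

theorem le_comap_of_le_comap_sup_of_isSolvable (f : K →ₗ⁅R⁆ L) {M : LieIdeal R K}
    (hM : ⁅M, M⁆ = M) {I J : LieIdeal R L} [LieAlgebra.IsSolvable J]
    (h : M ≤ comap f (I ⊔ J)) : M ≤ comap f I := by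
  obtain ⟨k, hk⟩ := LieAlgebra.IsSolvable.solvable (R := R) (L := J)
  simpa [(derivedSeries_eq_bot_iff J k).mp hk] using le_comap_sup_derivedSeriesOfIdeal f hM h k

end LieIdeal

theorem lieIdeal_decomposition_levi_general
    (F : Type*) [Field F]
    (L : Type*) [LieRing L] [LieAlgebra F L] [FiniteDimensional F L]
    (S : LieSubalgebra F L) (hS : LieAlgebra.IsSemisimple F S)
    (hcompl : IsCompl S.toSubmodule (LieAlgebra.radical F L).toSubmodule) :
    ∀ I : LieIdeal F L,
      I.toSubmodule =
        (I.toSubmodule ⊓ S.toSubmodule) ⊔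
          (I.toSubmodule ⊓ (LieAlgebra.radical F L).toSubmodule) ∧
      ∀ x ∈ I.toSubmodule ⊓ S.toSubmodule, ∀ y ∈ LieAlgebra.radical F L,
        ⁅x, y⁆ ∈ I.toSubmodule ⊓ (LieAlgebra.radical F L).toSubmodule := by
  intro I
  set R := LieAlgebra.radical F L
  have hproj : LieIdeal.comap S.incl (I ⊔ R) ≤ LieIdeal.comap S.incl I :=
    LieIdeal.le_comap_of_le_comap_sup_of_isSolvable S.incl
      (LieIdeal.lie_self_eq_of_isSemisimple _) le_rfl
  refine ⟨eq_inf_sup_inf_of_codisjoint hcompl.codisjoint ?_, ?_⟩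
  · rintro x ⟨hx, hxS⟩
    exact hproj (x := ⟨x, hxS⟩) (by simpa [← LieSubmodule.sup_toSubmodule] using hx)
  · rintro x ⟨hxI, -⟩ y hy
    exact ⟨lie_mem_left F L I x y hxI, R.lie_mem hy⟩

/-- Given a Levi decomposition `L = S ⊕ Rad(L)` of a finite-dimensional Lie algebra over
a field of characteristic zero, every Lie ideal `I` satisfies
`I = (I ∩ S) ⊕ (I ∩ Rad L)` and `⁅I ∩ S, Rad L⁆ ⊆ I ∩ Rad L`. -/
theorem lieIdeal_decomposition_levi
    (F : Type*) [Field F] [CharZero F]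
    (L : Type*) [LieRing L] [LieAlgebra F L] [FiniteDimensional F L]
    (S : LieSubalgebra F L) (hS : LieAlgebra.IsSemisimple F S)
    (hcompl : IsCompl S.toSubmodule (LieAlgebra.radical F L).toSubmodule) :
    ∀ I : LieIdeal F L,
      I.toSubmodule =
        (I.toSubmodule ⊓ S.toSubmodule) ⊔
          (I.toSubmodule ⊓ (LieAlgebra.radical F L).toSubmodule) ∧
      ∀ x ∈ I.toSubmodule ⊓ S.toSubmodule, ∀ y ∈ LieAlgebra.radical F L,
        ⁅x, y⁆ ∈ I.toSubmodule ⊓ (LieAlgebra.radical F L).toSubmodule :=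
  lieIdeal_decomposition_levi_general F L S hS hcompl
end

section
/- Let F be a field of characteristic zero and L a finite-dimensional Lie algebra over F with only finitely many Lie ideals. Then either L equals its derived ideal L² = ⁅L,L⁆, or the quotient vector space L/L² has dimension exactly 1. -/
/-!
The quotient `L / ⁅L, L⁆` is abelian, so every subspace of it pulls back to a Lie ideal of `L`;
hence it has only finitely many subspaces. Over an infinite field, two independent vectors
`x, y` would give infinitely many distinct lines `K ∙ (x + c • y)`, so its dimension is at most one.
-/

theorem Module.rank_le_one_of_finite_submodule (K V : Type*) [DivisionRing K] [Infinite K]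
    [AddCommGroup V] [Module K V] [Finite (Submodule K V)] : Module.rank K V ≤ 1 := by
  by_contra! h
  obtain ⟨x, hx⟩ := rank_pos_iff_exists_ne_zero.mp (zero_lt_one.trans h)
  obtain ⟨y, hxy⟩ := exists_linearIndependent_pair_of_one_lt_rank h hx
  have hinj : Function.Injective fun c : K => K ∙ (x + c • y) := by
    intro c c' (hcc' : K ∙ (x + c • y) = K ∙ (x + c' • y))
    have hmem : x + c' • y ∈ K ∙ (x + c • y) := hcc' ▸ Submodule.mem_span_singleton_self _
    obtain ⟨a, ha⟩ := Submodule.mem_span_singleton.mp hmem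
    have hzero : (a - 1) • x + (a * c - c') • y = 0 := by
      rw [← sub_eq_zero.mpr ha, smul_add, sub_smul, sub_smul, mul_smul, one_smul]
      abel
    obtain ⟨ha1, hc⟩ := LinearIndependent.pair_iff.mp hxy _ _ hzero
    rw [sub_eq_zero.mp ha1, one_mul] at hc
    exact sub_eq_zero.mp hc
  have := _root_.Finite.of_injective _ hinj
  exact not_finite K

namespace LieSubmodule

variable {R L M : Type*} [CommRing R] [LieRing L] [AddCommGroup M] [Module R M]
  [LieRingModule L M]

/-- `L` acts trivially on the quotient, so every subspace of it is a Lie submodule. -/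
def comapMkQ (N : LieSubmodule R L M) (hN : ∀ (x : L) (m : M), ⁅x, m⁆ ∈ N)
    (p : Submodule R (M ⧸ N.toSubmodule)) : LieSubmodule R L M where
  toSubmodule := p.comap N.toSubmodule.mkQ
  lie_mem {x m} _ := by
    simp [(Submodule.Quotient.mk_eq_zero _).mpr (hN x m)]

theorem comapMkQ_injective (N : LieSubmodule R L M) (hN : ∀ (x : L) (m : M), ⁅x, m⁆ ∈ N) :
    Function.Injective (comapMkQ N hN) := fun _ _ h =>
  Submodule.comap_injective_of_surjective N.toSubmodule.mkQ_surjective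
    (congrArg toSubmodule h)

theorem finite_submodule_quotient [Finite (LieSubmodule R L M)] (N : LieSubmodule R L M)
    (hN : ∀ (x : L) (m : M), ⁅x, m⁆ ∈ N) : Finite (Submodule R (M ⧸ N.toSubmodule)) :=
  .of_injective _ (comapMkQ_injective N hN)

end LieSubmodule

theorem derived_eq_top_or_codim_one_general
    (F : Type*) [Field F] [CharZero F]
    (L : Type*) [LieRing L] [LieAlgebra F L]
    [Finite (LieIdeal F L)] :
    (⁅(⊤ : LieIdeal F L), (⊤ : LieIdeal F L)⁆ : LieIdeal F L) = ⊤ ∨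
      Module.finrank F
        (L ⧸ (⁅(⊤ : LieIdeal F L), (⊤ : LieIdeal F L)⁆ : LieIdeal F L).toSubmodule) = 1 := by
  set D : LieIdeal F L := ⁅(⊤ : LieIdeal F L), (⊤ : LieIdeal F L)⁆
  have : Finite (Submodule F (L ⧸ D.toSubmodule)) :=
    LieSubmodule.finite_submodule_quotient D fun x y =>
      LieSubmodule.lie_mem_lie (LieSubmodule.mem_top x) (LieSubmodule.mem_top y)
  rcases Cardinal.le_one_iff.mp (Module.rank_le_one_of_finite_submodule F (L ⧸ D.toSubmodule))
    with h | h
  · rw [rank_zero_iff, Submodule.Quotient.subsingleton_iff] at h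
    exact Or.inl ((LieSubmodule.toSubmodule_eq_top D).mp h)
  · exact Or.inr (Module.rank_eq_one_iff_finrank_eq_one.mp h)

/-- A finite-dimensional Lie algebra over a field of characteristic zero with finitely
many Lie ideals either equals its derived ideal, or the quotient by the derived ideal
is one-dimensional. -/
theorem derived_eq_top_or_codim_one
    (F : Type*) [Field F] [CharZero F]
    (L : Type*) [LieRing L] [LieAlgebra F L] [FiniteDimensional F L]
    [Finite (LieIdeal F L)] :
    (⁅(⊤ : LieIdeal F L), (⊤ : LieIdeal F L)⁆ : LieIdeal F L) = ⊤ ∨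
      Module.finrank F
        (L ⧸ (⁅(⊤ : LieIdeal F L), (⊤ : LieIdeal F L)⁆ : LieIdeal F L).toSubmodule) = 1 :=
  derived_eq_top_or_codim_one_general F L
end

section
/- Let F be a field of characteristic zero and L a finite-dimensional Lie algebra over F with only finitely many Lie ideals. Then the center of L has dimension at most 1. -/
open Module

/-- The centre of a finite-dimensional Lie algebra over a field of characteristic zero
with finitely many Lie ideals has dimension at most one. -/
theorem finrank_center_le_one
    (F : Type*) [Field F] [CharZero F]
    (L : Type*) [LieRing L] [LieAlgebra F L] [FiniteDimensional F L]
    [Finite (LieIdeal F L)] :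
    Module.finrank F (LieAlgebra.center F L) ≤ 1 := by
  by_contra h
  push_neg at h
  set Z := LieAlgebra.center F L
  -- get two linearly independent vectors in the center
  have : Nontrivial Z := by
    apply Module.nontrivial_of_finrank_pos (R := F); omega
  obtain ⟨x, hx⟩ := exists_ne (0 : Z)
  obtain ⟨y, hxy⟩ := exists_linearIndependent_pair_of_one_lt_finrank h hx
  -- For each c : F, build a Lie ideal spanned by x + c • y
  have mem_Z : ∀ (c : F), ((x : L) + c • (y : L)) ∈ Z := by
    intro c
    exact Z.add_mem x.2 (Z.smul_mem c y.2)
  have key : ∀ (c : F), ∀ z : L, z ∈ Submodule.span F {(x : L) + c • y} →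
      ∀ w : L, ⁅w, z⁆ ∈ Submodule.span F {(x : L) + c • y} := by
    intro c z hz w
    have hzZ : z ∈ Z := by
      have : Submodule.span F {(x : L) + c • y} ≤ Z.toSubmodule :=
        Submodule.span_le.mpr (by simpa using mem_Z c)
      exact this hz
    have : ⁅w, z⁆ = 0 := (LieModule.mem_maxTrivSubmodule F L L z).mp hzZ w
    rw [this]; exact zero_mem _
  let I : F → LieIdeal F L := fun c =>
    { toSubmodule := Submodule.span F {(x : L) + c • y}
      lie_mem := fun {w z} hz => key c z hz w }
  have hInj : Function.Injective I := by
    intro c c' hcc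
    have hmem : (x : L) + c • y ∈ Submodule.span F {(x : L) + c' • y} := by
      have : Submodule.span F {(x : L) + c • y} = Submodule.span F {(x : L) + c' • y} := by
        have := congrArg (fun J : LieIdeal F L => J.toSubmodule) hcc
        simpa [I] using this
      rw [← this]; exact Submodule.mem_span_singleton_self _
    obtain ⟨a, ha⟩ := Submodule.mem_span_singleton.mp hmem
    -- lift to Z
    have haZ : a • (x + c' • y) = x + c • y := by
      apply Subtype.ext
      push_cast
      simpa [smul_add, smul_smul] using ha
    have hli := hxy
    rw [LinearIndependent.pair_iff] at hli
    have := hli (a - 1) (a * c' - c) (by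
      have : a • x + (a * c') • y - (x + c • y) = 0 := by
        rw [← smul_smul, ← smul_add, haZ]; abel
      rw [sub_smul, sub_smul, one_smul]
      rw [← this]; abel)
    have ha1 : a = 1 := sub_eq_zero.mp this.1
    have : a * c' = c := sub_eq_zero.mp this.2
    rw [ha1, one_mul] at this
    exact this.symm
  exact (Finite.of_injective I hInj).not_infinite (by infer_instance)
end

section
/- Let F be a field of characteristic zero and L a finite-dimensional Lie algebra over F with only finitely many Lie ideals. Suppose there exists x ∈ L with ⁅x, y⁆ = 0 for all y ∈ L² but x ∉ L², where L² = ⁅L,L⁆. Then the centralizer C_L(L²) = { x ∈ L : ⁅x, y⁆ = 0 for all y ∈ L² } equals the center Z(L), the center has dimension exactly 1, L² and Z(L) are complementary ideals (L² ⊓ Z(L) = ⊥ and L² ⊔ Z(L) = ⊤), and (L²)² = L². -/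
/-- Core lemma: with finitely many Lie ideals over an infinite field, there are no two
elements `u v`, independent mod an ideal `J`, whose brackets with everything land in `J`. -/
lemma aux_no_two_indep
    (F : Type*) [Field F] [Infinite F]
    (L : Type*) [LieRing L] [LieAlgebra F L] [Finite (LieIdeal F L)]
    (J : LieIdeal F L) (u v : L)
    (hu : ∀ y : L, ⁅y, u⁆ ∈ J) (hv : ∀ y : L, ⁅y, v⁆ ∈ J)
    (hind : ∀ c d : F, c • u + d • v ∈ J → c = 0 ∧ d = 0) : False := by
  let P : F → Submodule F L := fun a => J.toSubmodule ⊔ Submodule.span F {u + a • v}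
  have hP : ∀ a : F, ∀ y z : L, z ∈ P a → ⁅y, z⁆ ∈ J := by
    intro a y z hz
    have hle : P a ≤ (J.toSubmodule).comap (LieAlgebra.ad F L y) := by
      refine sup_le (fun j hj => ?_) ?_
      · simpa [Submodule.mem_comap, LieAlgebra.ad_apply] using J.lie_mem hj
      · rw [Submodule.span_le, Set.singleton_subset_iff]
        have h1 : ⁅y, u + a • v⁆ = ⁅y, u⁆ + a • ⁅y, v⁆ := by
          rw [lie_add, lie_smul]
        have h2 : ⁅y, u⁆ + a • ⁅y, v⁆ ∈ J := J.add_mem (hu y) (J.smul_mem a (hv y))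
        simpa [Submodule.mem_comap, LieAlgebra.ad_apply, h1] using h2
    simpa [Submodule.mem_comap, LieAlgebra.ad_apply] using hle hz
  let f : F → LieIdeal F L := fun a =>
    { toSubmodule := P a
      lie_mem := fun {y z} hz => Submodule.mem_sup_left (hP a y z hz) }
  have hfinj : Function.Injective f := by
    intro a b hab
    have h1 : u + a • v ∈ P b := by
      have h0 : u + a • v ∈ P a :=
        Submodule.mem_sup_right (Submodule.mem_span_singleton_self _)
      have hPab : P a = P b := congrArg LieSubmodule.toSubmodule hab
      rwa [hPab] at h0
    rcases Submodule.mem_sup.mp h1 with ⟨j, hj, w, hw, hjw⟩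
    rcases Submodule.mem_span_singleton.mp hw with ⟨c, rfl⟩
    have key : (1 - c) • u + (a - c * b) • v ∈ J := by
      have heq : (1 - c) • u + (a - c * b) • v = j := by
        linear_combination (norm := module) (-1 : F) • hjw
      rw [heq]; exact hj
    obtain ⟨hc, hd⟩ := hind _ _ key
    have hc1 : c = 1 := (sub_eq_zero.mp hc).symm
    have hab' := sub_eq_zero.mp hd
    rw [hc1, one_mul] at hab'
    exact hab'
  have := Finite.of_injective f hfinj
  exact not_finite F

/-- Let `L` be a finite-dimensional Lie algebra over a field of characteristic zero with
finitely many Lie ideals, and suppose the centralizer of the derived ideal `L²` is not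
contained in `L²`.  Then this centralizer equals the centre, the centre is
one-dimensional, `L²` and the centre are complementary ideals, and `(L²)² = L²`. -/
theorem structure_of_centralizer_not_in_derived
    (F : Type*) [Field F] [CharZero F]
    (L : Type*) [LieRing L] [LieAlgebra F L] [FiniteDimensional F L]
    [Finite (LieIdeal F L)]
    (hx : ∃ x : L, (∀ y ∈ (⁅(⊤ : LieIdeal F L), (⊤ : LieIdeal F L)⁆ : LieIdeal F L),
        ⁅x, y⁆ = 0) ∧ x ∉ (⁅(⊤ : LieIdeal F L), (⊤ : LieIdeal F L)⁆ : LieIdeal F L)) :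
    {x : L | ∀ y ∈ (⁅(⊤ : LieIdeal F L), (⊤ : LieIdeal F L)⁆ : LieIdeal F L), ⁅x, y⁆ = 0}
        = (LieAlgebra.center F L : Set L) ∧
      Module.finrank F (LieAlgebra.center F L) = 1 ∧
      IsCompl (⁅(⊤ : LieIdeal F L), (⊤ : LieIdeal F L)⁆ : LieIdeal F L)
        (LieAlgebra.center F L) ∧
      ⁅(⁅(⊤ : LieIdeal F L), (⊤ : LieIdeal F L)⁆ : LieIdeal F L),
          (⁅(⊤ : LieIdeal F L), (⊤ : LieIdeal F L)⁆ : LieIdeal F L)⁆ =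
        (⁅(⊤ : LieIdeal F L), (⊤ : LieIdeal F L)⁆ : LieIdeal F L) := by
  obtain ⟨x, hxc, hxd⟩ := hx
  set D : LieIdeal F L := ⁅(⊤ : LieIdeal F L), (⊤ : LieIdeal F L)⁆ with hD
  have hxne : x ≠ 0 := fun h => hxd (h ▸ D.zero_mem)
  have hmemD : ∀ a b : L, ⁅a, b⁆ ∈ D := fun a b =>
    LieSubmodule.lie_mem_lie (LieSubmodule.mem_top a) (LieSubmodule.mem_top b)
  -- every element decomposes as j + c • x with j ∈ D
  have hsup : ∀ y : L, ∃ j ∈ D, ∃ c : F, y = j + c • x := by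
    intro y
    by_contra hcon
    push_neg at hcon
    refine aux_no_two_indep F L D x y (fun z => hmemD z x) (fun z => hmemD z y) ?_
    intro c d hcd
    have hd : d = 0 := by
      by_contra hd
      refine hcon (d⁻¹ • (c • x + d • y)) (D.smul_mem _ hcd) (-(d⁻¹ * c)) ?_
      have : d⁻¹ • (c • x + d • y) + (-(d⁻¹ * c)) • x
          = (d⁻¹ * d) • y + ((d⁻¹ * c) - (d⁻¹ * c)) • x := by module
      rw [this, inv_mul_cancel₀ hd, one_smul, sub_self, zero_smul, add_zero]
    subst hd
    refine ⟨?_, rfl⟩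
    by_contra hc
    apply hxd
    have : x = c⁻¹ • (c • x + (0 : F) • y) := by
      rw [zero_smul, add_zero, smul_smul, inv_mul_cancel₀ hc, one_smul]
    rw [this]; exact D.smul_mem _ hcd
  -- x is central
  have hxcent : x ∈ LieAlgebra.center F L := by
    rw [LieModule.mem_maxTrivSubmodule]
    intro z
    obtain ⟨j, hj, c, rfl⟩ := hsup z
    have hjx : ⁅j, x⁆ = 0 := by rw [← lie_skew, hxc j hj, neg_zero]
    rw [add_lie, smul_lie, hjx, lie_self, smul_zero, add_zero]
  have hxz : ∀ z : L, ⁅z, x⁆ = 0 := (LieModule.mem_maxTrivSubmodule F L L x).mp hxcent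
  -- the center is contained in the span of x
  have hcentle : ∀ z ∈ LieAlgebra.center F L, ∃ c : F, z = c • x := by
    intro z hz
    by_contra hcon
    push_neg at hcon
    have hzz : ∀ y : L, ⁅y, z⁆ = 0 := (LieModule.mem_maxTrivSubmodule F L L z).mp hz
    refine aux_no_two_indep F L ⊥ x z (fun y => ?_) (fun y => ?_) ?_
    · rw [LieSubmodule.mem_bot]; exact hxz y
    · rw [LieSubmodule.mem_bot]; exact hzz y
    · intro c d hcd
      rw [LieSubmodule.mem_bot] at hcd
      have hd : d = 0 := by
        by_contra hd
        refine hcon (-(d⁻¹ * c)) ?_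
        have : z = d⁻¹ • (c • x + d • z) + (-(d⁻¹ * c)) • x := by
          have h1 : d⁻¹ • (c • x + d • z) + (-(d⁻¹ * c)) • x
              = (d⁻¹ * d) • z + ((d⁻¹ * c) - (d⁻¹ * c)) • x := by module
          rw [h1, inv_mul_cancel₀ hd, one_smul, sub_self, zero_smul, add_zero]
        rw [this, hcd, smul_zero, zero_add, neg_smul]
      subst hd
      rw [zero_smul, add_zero] at hcd
      rcases smul_eq_zero.mp hcd with hc | hx0
      · exact ⟨hc, rfl⟩
      · exact absurd hx0 hxne
  -- center = span of x, as submodules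
  have hcenteq : (LieAlgebra.center F L).toSubmodule = Submodule.span F {x} := by
    apply le_antisymm
    · intro z hz
      obtain ⟨c, rfl⟩ := hcentle z hz
      exact Submodule.smul_mem _ _ (Submodule.mem_span_singleton_self x)
    · rw [Submodule.span_le, Set.singleton_subset_iff]
      exact hxcent
  -- the four conclusions
  refine ⟨?_, ?_, ?_, ?_⟩
  · -- centralizer of D equals the center
    ext z
    simp only [Set.mem_setOf_eq, SetLike.mem_coe]
    constructor
    · intro hz
      rw [LieModule.mem_maxTrivSubmodule]
      intro w
      obtain ⟨j, hj, c, rfl⟩ := hsup w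
      have hjz : ⁅j, z⁆ = 0 := by rw [← lie_skew, hz j hj, neg_zero]
      have hxz' : ⁅x, z⁆ = 0 := by rw [← lie_skew, hxz z, neg_zero]
      rw [add_lie, smul_lie, hjz, hxz', smul_zero, add_zero]
    · intro hz y _
      rw [← lie_skew, (LieModule.mem_maxTrivSubmodule F L L z).mp hz y, neg_zero]
  · -- the center is one-dimensional
    have : Module.finrank F (LieAlgebra.center F L)
        = Module.finrank F (Submodule.span F {x}) := by
      rw [← hcenteq]; rfl
    rw [this, finrank_span_singleton hxne]
  · -- D and the center are complementary ideals
    constructor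
    · -- disjoint
      rw [disjoint_iff]
      rw [eq_bot_iff]
      intro z hz
      rw [LieSubmodule.mem_inf] at hz
      obtain ⟨hzD, hzZ⟩ := hz
      obtain ⟨c, rfl⟩ := hcentle z hzZ
      rw [LieSubmodule.mem_bot]
      by_contra hne
      have hc : c ≠ 0 := fun h => hne (by rw [h, zero_smul])
      apply hxd
      have : x = c⁻¹ • (c • x) := by rw [smul_smul, inv_mul_cancel₀ hc, one_smul]
      rw [this]; exact D.smul_mem _ hzD
    · -- codisjoint
      rw [codisjoint_iff, eq_top_iff]
      intro z _
      obtain ⟨j, hj, c, rfl⟩ := hsup z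
      exact add_mem ((le_sup_left : D ≤ D ⊔ _) hj)
        ((le_sup_right : LieAlgebra.center F L ≤ D ⊔ _)
          ((LieAlgebra.center F L).smul_mem c hxcent))
  · -- D is perfect
    apply le_antisymm
    · rw [LieSubmodule.lie_le_iff]
      intro a _ b _
      exact hmemD a b
    · conv_lhs => rw [hD]
      rw [LieSubmodule.lie_le_iff]
      intro a _ b _
      obtain ⟨j, hj, c, rfl⟩ := hsup a
      obtain ⟨k, hk, d, rfl⟩ := hsup b
      have hjx : ⁅j, x⁆ = 0 := by rw [← lie_skew, hxc j hj, neg_zero]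
      have hxk : ⁅x, k⁆ = 0 := hxc k hk
      have : ⁅j + c • x, k + d • x⁆ = ⁅j, k⁆ := by
        simp [add_lie, lie_add, smul_lie, lie_smul, hjx, hxk]
      rw [this]
      exact LieSubmodule.lie_mem_lie hj hk
end

section
/- Let F be a field of characteristic zero and L a finite-dimensional Lie algebra over F with only finitely many Lie ideals. If I is a Lie ideal of L with I ⊓ ⁅L, Rad(L)⁆ = ⊥, then I ⊓ Rad(L) is contained in the center of L, where Rad(L) is the solvable radical of L. -/
/-- In a finite-dimensional Lie algebra over a field of characteristic zero with finitely
many Lie ideals, any ideal meeting the Jacobson radical trivially intersects the solvable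
radical inside the centre. -/
theorem inf_radical_le_center_of_inf_jacobson_eq_bot
    (F : Type*) [Field F] [CharZero F]
    (L : Type*) [LieRing L] [LieAlgebra F L] [FiniteDimensional F L]
    [Finite (LieIdeal F L)]
    (I : LieIdeal F L)
    (h : I ⊓ ⁅(⊤ : LieIdeal F L), LieAlgebra.radical F L⁆ = ⊥) :
    I ⊓ LieAlgebra.radical F L ≤ LieAlgebra.center F L := by
  intro x hx
  obtain ⟨hxI, hxR⟩ := hx
  intro y
  have h1 : ⁅y, x⁆ ∈ I := I.lie_mem hxI
  have h2 : ⁅y, x⁆ ∈ ⁅(⊤ : LieIdeal F L), LieAlgebra.radical F L⁆ :=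
    LieSubmodule.lie_mem_lie (LieSubmodule.mem_top y) hxR
  have : ⁅y, x⁆ ∈ I ⊓ ⁅(⊤ : LieIdeal F L), LieAlgebra.radical F L⁆ := ⟨h1, h2⟩
  rw [h] at this
  simpa using this
end
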